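/- arXiv:2103.04546 — 3 statements merged into one kernel-verified Lean document; each statement's English description precedes it below -/
import Mathlib

section
/- Let ℓ be a fixed loss vector in R^n, let π be a finitely supported distribution on a finite set Π ⊂ R^n with full-rank support (span of the support equals span Π), let y ∼ π, let C = E[y yᵀ], let C⁻ be any generalized inverse of C, and let b be a random vector with E[b] orthogonal to lin Π := span{u − v : u, v ∈ Π}. Define the random vector ℓ̃ = (ℓᵀ y) · C⁻ y + b. Then for every w ∈ lin Π, E[ℓ̃]ᵀ w = ℓᵀ w. -/
open Matrix

lemma vecMulVec_mulVec' {n : ℕ} (u v x : Fin n → ℝ) :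
    (Matrix.vecMulVec u v) *ᵥ x = (v ⬝ᵥ x) • u := by
  funext i
  simp [Matrix.vecMulVec_apply, Matrix.mulVec, dotProduct, Finset.mul_sum,
    mul_comm, mul_left_comm]


lemma sum_mulVec' {n : ℕ} {Ω : Type*} [Fintype Ω] (M : Ω → Matrix (Fin n) (Fin n) ℝ)
    (v : Fin n → ℝ) : (∑ ω, M ω) *ᵥ v = ∑ ω, M ω *ᵥ v := by
  funext i
  simp only [Matrix.mulVec, dotProduct, Finset.sum_apply, Matrix.sum_apply,
    Finset.sum_mul]
  rw [Finset.sum_comm]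

lemma dotProduct_sum' {n : ℕ} {Ω : Type*} [Fintype Ω] (r : Fin n → ℝ)
    (v : Ω → (Fin n → ℝ)) : r ⬝ᵥ (∑ ω, v ω) = ∑ ω, r ⬝ᵥ v ω := by
  simp only [dotProduct, Finset.sum_apply, Finset.mul_sum]
  rw [Finset.sum_comm]

lemma mulVec_sum' {n : ℕ} {Ω : Type*} [Fintype Ω] (M : Matrix (Fin n) (Fin n) ℝ)
    (v : Ω → (Fin n → ℝ)) : M *ᵥ (∑ ω, v ω) = ∑ ω, M *ᵥ v ω := by
  funext i
  simp [Matrix.mulVec, dotProduct, Finset.sum_apply, Finset.mul_sum]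
  rw [Finset.sum_comm]

/-- Unbiasedness of the loss estimate `ℓ̃ = (ℓᵀ y) C⁻ y + b`:
on a finite probability space, if `y` is supported on `Π`, the support of the law of `y`
spans `span Π`, `C = E[y yᵀ]`, `C⁻` is any generalized inverse of `C`, and `E[b]` is
orthogonal to `lin Π = span {u - v : u, v ∈ Π}`, then `E[ℓ̃]ᵀ w = ℓᵀ w` for every
`w ∈ lin Π`. -/
theorem loss_estimate_unbiased {n : ℕ} {Ω : Type*} [Fintype Ω]
    (p : Ω → ℝ) (hp : ∀ ω, 0 ≤ p ω) (hpsum : ∑ ω, p ω = 1)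
    (Pi : Finset (Fin n → ℝ)) (ℓ : Fin n → ℝ)
    (Y B : Ω → (Fin n → ℝ))
    (hY : ∀ ω, p ω ≠ 0 → Y ω ∈ Pi)
    (hfull : Submodule.span ℝ {v | ∃ ω, p ω ≠ 0 ∧ Y ω = v}
        = Submodule.span ℝ (Pi : Set (Fin n → ℝ)))
    (C Cinv : Matrix (Fin n) (Fin n) ℝ)
    (hC : C = ∑ ω, p ω • Matrix.vecMulVec (Y ω) (Y ω))
    (hginv : C * Cinv * C = C)
    (linPi : Submodule ℝ (Fin n → ℝ))
    (hlin : linPi = Submodule.span ℝ {d | ∃ u ∈ Pi, ∃ v ∈ Pi, d = u - v})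
    (hB : ∀ w ∈ linPi, (∑ ω, p ω • B ω) ⬝ᵥ w = 0)
    (ltil : Ω → (Fin n → ℝ))
    (hltil : ∀ ω, ltil ω = (ℓ ⬝ᵥ Y ω) • Cinv.mulVec (Y ω) + B ω) :
    ∀ w ∈ linPi, (∑ ω, p ω • ltil ω) ⬝ᵥ w = ℓ ⬝ᵥ w := by
  intro w hw
  set r : Fin n → ℝ := Cinv *ᵥ (C *ᵥ ℓ) - ℓ with hr
  -- C r = 0
  have hCr : C *ᵥ r = 0 := by
    have : C *ᵥ (Cinv *ᵥ (C *ᵥ ℓ)) = C *ᵥ ℓ := by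
      rw [Matrix.mulVec_mulVec, Matrix.mulVec_mulVec, hginv]
    rw [hr, Matrix.mulVec_sub, this, sub_self]
  -- r ⬝ C r expands to sum of squares
  have hsq : ∑ ω, p ω * (Y ω ⬝ᵥ r) ^ 2 = 0 := by
    have h1 : r ⬝ᵥ (C *ᵥ r) = 0 := by rw [hCr, dotProduct_zero]
    have h2 : r ⬝ᵥ (C *ᵥ r) = ∑ ω, p ω * (Y ω ⬝ᵥ r) ^ 2 := by
      rw [hC, sum_mulVec', dotProduct_sum']
      refine Finset.sum_congr rfl fun ω _ => ?_
      rw [Matrix.smul_mulVec, vecMulVec_mulVec', dotProduct_smul,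
        dotProduct_smul]
      simp [dotProduct_comm r (Y ω), pow_two, smul_eq_mul]
    rw [← h2, h1]
  -- each support point is orthogonal to r
  have hsupp : ∀ ω, p ω ≠ 0 → Y ω ⬝ᵥ r = 0 := by
    intro ω hpω
    have hterm : p ω * (Y ω ⬝ᵥ r) ^ 2 = 0 := by
      have := (Finset.sum_eq_zero_iff_of_nonneg
        (fun ω _ => mul_nonneg (hp ω) (sq_nonneg _))).mp hsq ω (Finset.mem_univ ω)
      exact this
    have := (mul_eq_zero.mp hterm).resolve_left hpω
    exact (pow_eq_zero_iff two_ne_zero).mp this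
  -- the kernel submodule
  let f : (Fin n → ℝ) →ₗ[ℝ] ℝ :=
    { toFun := fun x => x ⬝ᵥ r
      map_add' := fun a b => add_dotProduct a b r
      map_smul' := fun c a => smul_dotProduct c a r }
  have hker : ∀ x ∈ Pi, x ⬝ᵥ r = 0 := by
    intro x hx
    have hspan : Submodule.span ℝ (Pi : Set (Fin n → ℝ)) ≤ LinearMap.ker f := by
      rw [← hfull, Submodule.span_le]
      rintro _ ⟨ω, hpω, rfl⟩
      exact hsupp ω hpω
    exact hspan (Submodule.subset_span hx)
  have hwr : w ⬝ᵥ r = 0 := by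
    have hsub : linPi ≤ LinearMap.ker f := by
      rw [hlin, Submodule.span_le]
      rintro _ ⟨u, hu, v, hv, rfl⟩
      have : f (u - v) = u ⬝ᵥ r - v ⬝ᵥ r := map_sub f u v
      simp only [LinearMap.mem_ker, SetLike.mem_coe]
      show (u - v) ⬝ᵥ r = 0
      rw [sub_dotProduct, hker u hu, hker v hv, sub_self]
    exact hsub hw
  -- compute the expectation
  have hmean : ∑ ω, p ω • ltil ω = (r + ℓ) + ∑ ω, p ω • B ω := by
    have h1 : ∑ ω, p ω • ltil ω
        = (∑ ω, (p ω * (ℓ ⬝ᵥ Y ω)) • (Cinv *ᵥ Y ω)) + ∑ ω, p ω • B ω := by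
      rw [← Finset.sum_add_distrib]
      refine Finset.sum_congr rfl fun ω _ => ?_
      rw [hltil ω, smul_add, smul_smul]
    have h2 : ∑ ω, (p ω * (ℓ ⬝ᵥ Y ω)) • (Cinv *ᵥ Y ω)
        = Cinv *ᵥ (∑ ω, (p ω * (ℓ ⬝ᵥ Y ω)) • Y ω) := by
      rw [mulVec_sum']
      refine Finset.sum_congr rfl fun ω _ => ?_
      rw [Matrix.mulVec_smul]
    have h3 : ∑ ω, (p ω * (ℓ ⬝ᵥ Y ω)) • Y ω = C *ᵥ ℓ := by
      rw [hC, sum_mulVec']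
      refine Finset.sum_congr rfl fun ω _ => ?_
      rw [Matrix.smul_mulVec, vecMulVec_mulVec', smul_smul,
        dotProduct_comm (Y ω) ℓ]
    have h4 : Cinv *ᵥ (C *ᵥ ℓ) = r + ℓ := by rw [hr]; abel
    rw [h1, h2, h3, h4]
  rw [hmean, add_dotProduct, add_dotProduct, hB w hw,
    dotProduct_comm r w, hwr]
  ring
end

section
/- In a tree-form sequential decision process, let y ∈ Π be any pure sequence-form strategy, and let w be the recursive weights of the dilated entropy DGF (w_j = 2 + 2·max_a w_{ρ(j,a)}, w_k = Σ_s w_{ρ(k,s)}, w_⋄ = 0). Then for every sequence ja with y_{ja} = 1, Σ_{j'a' ⪰ ja} (w_{j'} y_{j'a'}) / (w_j y_{ja}) ≤ 2, where the sum ranges over all sequences j'a' that are descendants of ja (including ja itself). -/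
inductive TFT : Type where
  | term : TFT
  | dec : (n : ℕ) → (Fin n → TFT) → TFT
  | obs : (n : ℕ) → (Fin n → TFT) → TFT

namespace TFT

noncomputable def wt : TFT → ℝ
  | term => 0
  | dec _ c => 2 + 2 * (List.ofFn fun i => wt (c i)).foldr max 0
  | obs _ c => ∑ i, wt (c i)

def Seq : TFT → Type
  | term => Empty
  | dec n c => Σ i : Fin n, Option (Seq (c i))
  | obs n c => Σ i : Fin n, Seq (c i)

instance seqFintype : (t : TFT) → Fintype (Seq t)
  | term => inferInstanceAs (Fintype Empty)
  | dec n c => by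
      letI := fun i => seqFintype (c i)
      exact inferInstanceAs (Fintype (Σ i : Fin n, Option (Seq (c i))))
  | obs n c => by
      letI := fun i => seqFintype (c i)
      exact inferInstanceAs (Fintype (Σ i : Fin n, Seq (c i)))

instance seqDecEq : (t : TFT) → DecidableEq (Seq t)
  | term => inferInstanceAs (DecidableEq Empty)
  | dec n c => by
      letI := fun i => seqDecEq (c i)
      exact inferInstanceAs (DecidableEq (Σ i : Fin n, Option (Seq (c i))))
  | obs n c => by
      letI := fun i => seqDecEq (c i)
      exact inferInstanceAs (DecidableEq (Σ i : Fin n, Seq (c i)))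

def IsSF : (t : TFT) → (Seq t → ℝ) → ℝ → Prop
  | term, _, _ => True
  | dec _ c, x, par =>
      (∑ i, x ⟨i, none⟩) = par ∧
      ∀ i, IsSF (c i) (fun s => x ⟨i, some s⟩) (x ⟨i, none⟩)
  | obs _ c, x, par => ∀ i, IsSF (c i) (fun s => x ⟨i, s⟩) par

noncomputable def decW : (t : TFT) → Seq t → ℝ
  | term => fun s => Empty.elim s
  | dec n c => fun σ => match σ with
      | ⟨_, none⟩ => wt (dec n c)
      | ⟨i, some s⟩ => decW (c i) s
  | obs _ c => fun σ => decW (c σ.1) σ.2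

noncomputable def succW : (t : TFT) → Seq t → ℝ
  | term => fun s => Empty.elim s
  | dec _ c => fun σ => match σ with
      | ⟨i, none⟩ => wt (c i)
      | ⟨i, some s⟩ => succW (c i) s
  | obs _ c => fun σ => succW (c σ.1) σ.2

def parent : (t : TFT) → Seq t → Option (Seq t)
  | term => fun s => Empty.elim s
  | dec _ c => fun σ => match σ with
      | ⟨_, none⟩ => none
      | ⟨i, some s⟩ =>
          some (match parent (c i) s with
            | none => ⟨i, none⟩
            | some q => ⟨i, some q⟩)
  | obs _ c => fun σ => (parent (c σ.1) σ.2).map fun q => ⟨σ.1, q⟩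

noncomputable def u : (t : TFT) → Seq t → Seq t → ℝ
  | term => fun s => Empty.elim s
  | dec _ c => fun σ σ' => match σ, σ' with
      | ⟨i, none⟩, ⟨i', _⟩ => if i' = i then 1 else 0
      | ⟨_, some _⟩, ⟨_, none⟩ => 0
      | ⟨i, some s⟩, ⟨i', some s'⟩ => if h : i' = i then u (c i) s (h ▸ s') else 0
  | obs _ c => fun σ σ' =>
      if h : σ'.1 = σ.1 then u (c σ.1) σ.2 (h ▸ σ'.2) else 0

/-- The Hessian of the dilated entropy DGF at a strictly positive sequence-form
strategy `x`, given entrywise. -/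
noncomputable def hess (t : TFT) (x : Seq t → ℝ) : Matrix (Seq t) (Seq t) ℝ :=
  fun σ σ' =>
    if σ' = σ then (decW t σ + succW t σ) / x σ
    else if parent t σ' = some σ then -(decW t σ') / x σ
    else if parent t σ = some σ' then -(decW t σ) / x σ'
    else 0

/-- The dilated entropy distance-generating function. -/
noncomputable def psi : (t : TFT) → (Seq t → ℝ) → ℝ → ℝ
  | term, _, _ => 0
  | dec n c, x, par =>
      wt (dec n c) *
          (par * Real.log n + ∑ i, x ⟨i, none⟩ * Real.log (x ⟨i, none⟩ / par)) +
        ∑ i, psi (c i) (fun s => x ⟨i, some s⟩) (x ⟨i, none⟩)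
  | obs _ c, x, par => ∑ i, psi (c i) (fun s => x ⟨i, s⟩) par

/-- The strategy that randomizes uniformly at every decision point. -/
def IsUniform : (t : TFT) → (Seq t → ℝ) → ℝ → Prop
  | term, _, _ => True
  | dec n c, x, par =>
      (∀ i : Fin n, x ⟨i, none⟩ = par / n) ∧
      ∀ i, IsUniform (c i) (fun s => x ⟨i, some s⟩) (x ⟨i, none⟩)
  | obs _ c, x, par => ∀ i, IsUniform (c i) (fun s => x ⟨i, s⟩) par

/-!
By induction on the tree, a nonnegative sequence-form strategy that reaches a subtree `t` with
mass `p` puts `decW`-weighted mass at most `2 * wt t * p` on the sequences of `t`: at a decision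
node `j`, the sequence `ja` contributes `w_j y_{ja}` itself and, inductively, at most
`2 w_{ρ(j,a)} y_{ja} ≤ (w_j - 2) y_{ja}` below it. Hence the descendants of `ja`, itself
included, carry weighted mass at most `2 w_j y_{ja}`, which is the claim after dividing.
-/

lemma sum_seq_dec (n : ℕ) (c : Fin n → TFT) (f : Seq (dec n c) → ℝ) :
    ∑ σ, f σ = ∑ i, (f ⟨i, none⟩ + ∑ s, f ⟨i, some s⟩) := by
  let := fun i => seqFintype (c i)
  exact (Fintype.sum_sigma f).trans (Finset.sum_congr rfl fun i _ => Fintype.sum_option _)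

lemma sum_seq_obs (n : ℕ) (c : Fin n → TFT) (f : Seq (obs n c) → ℝ) :
    ∑ σ, f σ = ∑ i, ∑ s, f ⟨i, s⟩ := by
  let := fun i => seqFintype (c i)
  exact Fintype.sum_sigma f

lemma sum_u_dec_none (n : ℕ) (c : Fin n → TFT) (i : Fin n) (f : Seq (dec n c) → ℝ) :
    ∑ σ', u (dec n c) ⟨i, none⟩ σ' * f σ' = f ⟨i, none⟩ + ∑ s, f ⟨i, some s⟩ := by
  rw [sum_seq_dec, Finset.sum_eq_single i]
  · simp [u]
  · intro j _ hj
    simp [u, hj]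
  · simp

lemma sum_u_dec_some (n : ℕ) (c : Fin n → TFT) (i : Fin n) (s : Seq (c i))
    (f : Seq (dec n c) → ℝ) :
    ∑ σ', u (dec n c) ⟨i, some s⟩ σ' * f σ' = ∑ s', u (c i) s s' * f ⟨i, some s'⟩ := by
  rw [sum_seq_dec, Finset.sum_eq_single i]
  · simp [u]
  · intro j _ hj
    simp [u, hj]
  · simp

lemma sum_u_obs (n : ℕ) (c : Fin n → TFT) (i : Fin n) (s : Seq (c i))
    (f : Seq (obs n c) → ℝ) :
    ∑ σ', u (obs n c) ⟨i, s⟩ σ' * f σ' = ∑ s', u (c i) s s' * f ⟨i, s'⟩ := by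
  rw [sum_seq_obs, Finset.sum_eq_single i]
  · simp [u]
  · intro j _ hj
    simp [u, hj]
  · simp

lemma le_foldr_max {α : Type*} [LinearOrder α] (l : List α) (b : α) : b ≤ l.foldr max b := by
  induction l with
  | nil => exact le_rfl
  | cons _ _ ih => exact ih.trans (le_max_right _ _)

lemma wt_nonneg : ∀ t, 0 ≤ wt t
  | term => le_rfl
  | dec n c => by
      have := le_foldr_max (List.ofFn fun i => wt (c i)) 0
      simp only [wt]
      linarith
  | obs n c => Finset.sum_nonneg fun i _ => wt_nonneg (c i)

lemma two_add_two_mul_wt_le (n : ℕ) (c : Fin n → TFT) (i : Fin n) :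
    2 + 2 * wt (c i) ≤ wt (dec n c) := by
  have hmem : wt (c i) ∈ List.ofFn fun j => wt (c j) := List.mem_ofFn.mpr ⟨i, rfl⟩
  have := List.le_max_of_le' 0 hmem le_rfl
  simp only [wt]
  linarith

lemma wt_dec_mul_add_le (n : ℕ) (c : Fin n → TFT) (i : Fin n) {q b : ℝ} (hq : 0 ≤ q)
    (hb : b ≤ 2 * wt (c i) * q) : wt (dec n c) * q + b ≤ 2 * wt (dec n c) * q := by
  nlinarith [two_add_two_mul_wt_le n c i]

lemma decW_nonneg : ∀ t (σ : Seq t), 0 ≤ decW t σ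
  | term, σ => Empty.elim σ
  | dec n c, ⟨_, none⟩ => by simpa only [decW] using wt_nonneg (dec n c)
  | dec _ c, ⟨i, some s⟩ => by simpa only [decW] using decW_nonneg (c i) s
  | obs _ c, ⟨i, s⟩ => by simpa only [decW] using decW_nonneg (c i) s

theorem sum_decW_mul_le : ∀ t (y : Seq t → ℝ) (p : ℝ), IsSF t y p → (∀ σ, 0 ≤ y σ) →
    ∑ σ, decW t σ * y σ ≤ 2 * wt t * p
  | term, _, _, _, _ => by
      simp only [wt, mul_zero, zero_mul]
      exact Finset.sum_nonpos fun σ _ => Empty.elim σ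
  | dec n c, y, p, ⟨hsum, hsf⟩, hy => by
      calc ∑ σ, decW (dec n c) σ * y σ
          ≤ ∑ i, 2 * wt (dec n c) * y ⟨i, none⟩ := by
            simp only [sum_seq_dec, decW]
            exact Finset.sum_le_sum fun i _ => wt_dec_mul_add_le n c i (hy ⟨i, none⟩)
              (sum_decW_mul_le (c i) _ _ (hsf i) fun s => hy ⟨i, some s⟩)
        _ = 2 * wt (dec n c) * p := by rw [← Finset.mul_sum, hsum]
  | obs n c, y, p, hsf, hy => by
      calc ∑ σ, decW (obs n c) σ * y σ
          ≤ ∑ i, 2 * wt (c i) * p := by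
            rw [sum_seq_obs]
            exact Finset.sum_le_sum fun i _ =>
              sum_decW_mul_le (c i) _ p (hsf i) fun s => hy ⟨i, s⟩
        _ = 2 * wt (obs n c) * p := by simp only [wt, Finset.mul_sum, Finset.sum_mul]

theorem sum_u_mul_decW_mul_le : ∀ t (y : Seq t → ℝ) (p : ℝ), IsSF t y p → (∀ σ, 0 ≤ y σ) →
    ∀ σ, ∑ σ', u t σ σ' * (decW t σ' * y σ') ≤ 2 * decW t σ * y σ
  | term, _, _, _, _, σ => σ.elim
  | dec n c, y, _, ⟨_, hsf⟩, hy, ⟨i, none⟩ => by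
      simp only [sum_u_dec_none, decW]
      exact wt_dec_mul_add_le n c i (hy ⟨i, none⟩)
        (sum_decW_mul_le (c i) _ _ (hsf i) fun s => hy ⟨i, some s⟩)
  | dec n c, y, _, ⟨_, hsf⟩, hy, ⟨i, some s⟩ => by
      simp only [sum_u_dec_some, decW]
      exact sum_u_mul_decW_mul_le (c i) _ _ (hsf i) (fun s => hy ⟨i, some s⟩) s
  | obs n c, y, p, hsf, hy, ⟨i, s⟩ => by
      simp only [sum_u_obs, decW]
      exact sum_u_mul_decW_mul_le (c i) _ p (hsf i) (fun s => hy ⟨i, s⟩) s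

theorem pure_weighted_descendant_sum_le_two_general (t : TFT) (y : Seq t → ℝ)
    (hsf : IsSF t y 1) (hpure : ∀ σ, y σ = 0 ∨ y σ = 1)
    (σ : Seq t) :
    ∑ σ', u t σ σ' * (decW t σ' * y σ' / (decW t σ * y σ)) ≤ 2 := by
  have hy (σ' : Seq t) : 0 ≤ y σ' := (hpure σ').elim (·.ge) fun h => h ▸ zero_le_one
  simp only [← mul_div_assoc, ← Finset.sum_div]
  refine div_le_of_le_mul₀ (mul_nonneg (decW_nonneg t σ) (hy σ)) zero_le_two ?_
  simpa only [mul_assoc] using sum_u_mul_decW_mul_le t y 1 hsf hy σ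

/-- For a pure sequence-form strategy `y` and any sequence `σ = ja` with `y_{ja} = 1`,
`Σ_{j'a' ⪰ ja} (w_{j'} y_{j'a'}) / (w_j y_{ja}) ≤ 2`. -/
theorem pure_weighted_descendant_sum_le_two (t : TFT) (y : Seq t → ℝ)
    (hsf : IsSF t y 1) (hpure : ∀ σ, y σ = 0 ∨ y σ = 1)
    (σ : Seq t) (hσ : y σ = 1) :
    ∑ σ', u t σ σ' * (decW t σ' * y σ' / (decW t σ * y σ)) ≤ 2 :=
  pure_weighted_descendant_sum_le_two_general t y hsf hpure σ

end TFT
end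

section
/- Let C₁, …, C_n be symmetric positive-semidefinite matrices with generalized inverses C_i⁻ (C_i C_i⁻ C_i = C_i), and let x_i be vectors with C_i C_i⁻ x_i = x_i and x_iᵀ C_i⁻ x_i = 1 for each i. Define the block matrix C with diagonal blocks C_i and off-diagonal blocks x_i x_jᵀ (i ≠ j), the block-diagonal matrix C̃ with blocks C_i⁻, and μ = (C_1⁻ x_1, …, C_n⁻ x_n) stacked. Then C C̃ C = C + (n−1)·x xᵀ where x = (x_1, …, x_n) stacked, and C μ = n·x; consequently C̃ − ((n−1)/n²) μ μᵀ is a generalized inverse of C. -/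
/-!
Write `C = A + x xᵀ` with `A` block diagonal with blocks `Aᵢ = Cᵢ - xᵢ xᵢᵀ`. The hypotheses on
`Cᵢ⁻` give, block by block, `Aᵢ Cᵢ⁻ Aᵢ = Aᵢ`, `Aᵢ Cᵢ⁻ xᵢ = 0` and `xᵢᵀ Cᵢ⁻ Aᵢ = 0` (the last
one uses the symmetry of `Cᵢ`). Hence all cross terms of `(A + x xᵀ) C̃ (A + x xᵀ)` vanish, while
`x xᵀ C̃ x xᵀ = (xᵀ C̃ x) x xᵀ = n x xᵀ`; likewise `C μ = C C̃ x = n x`. As `C` is symmetric,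
`C μ μᵀ C = n² x xᵀ`, so subtracting `((n-1)/n²) μ μᵀ` from `C̃` removes the surplus `(n-1) x xᵀ`.
-/

open Matrix

namespace Matrix

section RankOne

variable {m R : Type*} [Fintype m] [CommRing R]

section GeneralizedInverse

variable {C G : Matrix m m R} {x : m → R}

theorem vecMul_mul_eq_of_mulVec_mulVec_eq (hC : Cᵀ = C) (hG : C * G * C = C)
    (hfix : C *ᵥ G *ᵥ x = x) : x ᵥ* (G * C) = x := by
  have hx : (G *ᵥ x) ᵥ* C = x := by rw [← hC, vecMul_transpose, hfix]
  rw [← hx, vecMul_vecMul, ← Matrix.mul_assoc, hG]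

theorem sub_vecMulVec_mulVec_mulVec (hfix : C *ᵥ G *ᵥ x = x) (hone : x ⬝ᵥ G *ᵥ x = 1) :
    (C - vecMulVec x x) *ᵥ G *ᵥ x = 0 := by
  rw [sub_mulVec, hfix, vecMulVec_mulVec, hone]
  simp

theorem vecMul_vecMul_sub_vecMulVec (hC : Cᵀ = C) (hG : C * G * C = C)
    (hfix : C *ᵥ G *ᵥ x = x) (hone : x ⬝ᵥ G *ᵥ x = 1) :
    x ᵥ* G ᵥ* (C - vecMulVec x x) = 0 := by
  rw [vecMul_sub, vecMul_vecMul, vecMul_mul_eq_of_mulVec_mulVec_eq hC hG hfix, vecMul_vecMulVec,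
    ← dotProduct_mulVec, hone, one_smul, sub_self]

theorem sub_vecMulVec_mul_mul_sub_vecMulVec (hC : Cᵀ = C) (hG : C * G * C = C)
    (hfix : C *ᵥ G *ᵥ x = x) (hone : x ⬝ᵥ G *ᵥ x = 1) :
    (C - vecMulVec x x) * G * (C - vecMulVec x x) = C - vecMulVec x x := by
  have hxGx : x ᵥ* G ⬝ᵥ x = 1 := by rw [← dotProduct_mulVec, hone]
  rw [Matrix.sub_mul, Matrix.sub_mul, Matrix.mul_sub, Matrix.mul_sub, hG, mul_vecMulVec,
    ← mulVec_mulVec, hfix, vecMulVec_mul, vecMulVec_mul, vecMulVec_mul_vecMulVec, vecMul_vecMul,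
    vecMul_mul_eq_of_mulVec_mulVec_eq hC hG hfix, hxGx, one_smul]
  abel

end GeneralizedInverse

variable {A G : Matrix m m R} {v : m → R}

theorem add_vecMulVec_mul_mul_add_vecMulVec (hA : A * G * A = A) (hAG : A *ᵥ G *ᵥ v = 0)
    (hGA : v ᵥ* G ᵥ* A = 0) :
    (A + vecMulVec v v) * G * (A + vecMulVec v v) = A + (v ⬝ᵥ G *ᵥ v) • vecMulVec v v := by
  rw [Matrix.add_mul, Matrix.add_mul, Matrix.mul_add, Matrix.mul_add, hA, mul_vecMulVec,
    ← mulVec_mulVec, hAG, vecMulVec_mul, vecMulVec_mul, hGA, vecMulVec_mul_vecMulVec,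
    ← dotProduct_mulVec, vecMulVec_smul, zero_vecMulVec, vecMulVec_zero, add_zero, zero_add]

theorem add_vecMulVec_mulVec_mulVec (hAG : A *ᵥ G *ᵥ v = 0) :
    (A + vecMulVec v v) *ᵥ G *ᵥ v = (v ⬝ᵥ G *ᵥ v) • v := by
  rw [add_mulVec, hAG, vecMulVec_mulVec, zero_add, op_smul_eq_smul]

theorem mul_sub_smul_vecMulVec_mul_eq_self {K : Type*} [Field K] {M G : Matrix m m K}
    {v w : m → K} {c d : K} (hd : d ≠ 0) (hM : Mᵀ = M) (hMGM : M * G * M = M + c • vecMulVec v v)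
    (hMw : M *ᵥ w = d • v) :
    M * (G - (c / d ^ 2) • vecMulVec w w) * M = M := by
  have hwM : w ᵥ* M = d • v := by rw [← hM, vecMul_transpose, hMw]
  rw [Matrix.mul_sub, Matrix.sub_mul, hMGM, Matrix.mul_smul, Matrix.smul_mul, mul_vecMulVec,
    vecMulVec_mul, hMw, hwM, smul_vecMulVec, vecMulVec_smul, smul_smul, smul_smul,
    div_mul_eq_mul_div, div_mul_eq_mul_div, mul_assoc, ← sq,
    mul_div_cancel_right₀ _ (pow_ne_zero 2 hd), add_sub_cancel_right]

end RankOne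

section BlockDiagonal

variable {o α : Type*} {m' n' : o → Type*}

theorem blockDiagonal'_apply_eq_dite [DecidableEq o] [Zero α] (M : ∀ i, Matrix (m' i) (m' i) α)
    (p q : Σ i, m' i) :
    blockDiagonal' M p q = if h : p.1 = q.1 then M q.1 (h ▸ p.2) q.2 else 0 := by
  obtain ⟨i, a⟩ := p
  obtain ⟨j, b⟩ := q
  rcases eq_or_ne i j with rfl | hij
  · simp
  · simp [hij, blockDiagonal'_apply_ne _ _ _ hij]

theorem blockDiagonal'_mulVec_uncurry [Fintype o] [DecidableEq o] [NonUnitalNonAssocSemiring α]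
    [∀ i, Fintype (n' i)] (M : ∀ i, Matrix (m' i) (n' i) α) (v : ∀ i, n' i → α) :
    blockDiagonal' M *ᵥ Sigma.uncurry v = Sigma.uncurry fun i => M i *ᵥ v i := by
  ext ⟨i, a⟩
  simp only [mulVec, dotProduct, ← Finset.univ_sigma_univ, Finset.sum_sigma, Sigma.uncurry]
  rw [Fintype.sum_eq_single i fun j hj => by simp [blockDiagonal'_apply_ne _ _ _ hj.symm]]
  simp

theorem uncurry_vecMul_blockDiagonal' [Fintype o] [DecidableEq o] [NonUnitalNonAssocSemiring α]
    [∀ i, Fintype (m' i)] (M : ∀ i, Matrix (m' i) (n' i) α) (v : ∀ i, m' i → α) :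
    Sigma.uncurry v ᵥ* blockDiagonal' M = Sigma.uncurry fun i => v i ᵥ* M i := by
  ext ⟨i, a⟩
  simp only [vecMul, dotProduct, ← Finset.univ_sigma_univ, Finset.sum_sigma, Sigma.uncurry]
  rw [Fintype.sum_eq_single i fun j hj => by simp [blockDiagonal'_apply_ne _ _ _ hj]]
  simp

theorem uncurry_dotProduct_uncurry [Fintype o] [AddCommMonoid α] [Mul α] [∀ i, Fintype (m' i)]
    (u v : ∀ i, m' i → α) :
    Sigma.uncurry u ⬝ᵥ Sigma.uncurry v = ∑ i, u i ⬝ᵥ v i := by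
  simp only [dotProduct, ← Finset.univ_sigma_univ, Finset.sum_sigma, Sigma.uncurry]

end BlockDiagonal

section ProductAutocorrelation

variable {o R : Type*} [DecidableEq o] [CommRing R] {κ : o → Type*}

def productAutocorrelation (C : ∀ i, Matrix (κ i) (κ i) R) (x : ∀ i, κ i → R) :
    Matrix (Σ i, κ i) (Σ i, κ i) R :=
  blockDiagonal' (fun i => C i - vecMulVec (x i) (x i)) +
    vecMulVec (Sigma.uncurry x) (Sigma.uncurry x)

variable {C G : ∀ i, Matrix (κ i) (κ i) R} {x : ∀ i, κ i → R}

theorem productAutocorrelation_apply (p q : Σ i, κ i) :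
    productAutocorrelation C x p q =
      if h : p.1 = q.1 then C q.1 (h ▸ p.2) q.2 else x p.1 p.2 * x q.1 q.2 := by
  obtain ⟨i, a⟩ := p
  obtain ⟨j, b⟩ := q
  rcases eq_or_ne i j with rfl | hij
  · simp [productAutocorrelation, vecMulVec_apply, Sigma.uncurry]
  · simp [productAutocorrelation, hij, blockDiagonal'_apply_ne _ _ _ hij, vecMulVec_apply,
      Sigma.uncurry]

theorem productAutocorrelation_transpose (hC : ∀ i, (C i)ᵀ = C i) :
    (productAutocorrelation C x)ᵀ = productAutocorrelation C x := by
  simp [productAutocorrelation, transpose_vecMulVec, hC]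

variable [Fintype o] [∀ i, Fintype (κ i)]

theorem uncurry_dotProduct_blockDiagonal'_mulVec_uncurry (hone : ∀ i, x i ⬝ᵥ G i *ᵥ x i = 1) :
    Sigma.uncurry x ⬝ᵥ blockDiagonal' G *ᵥ Sigma.uncurry x = Fintype.card o := by
  simp [blockDiagonal'_mulVec_uncurry, uncurry_dotProduct_uncurry, hone]

theorem productAutocorrelation_mulVec (hfix : ∀ i, C i *ᵥ G i *ᵥ x i = x i)
    (hone : ∀ i, x i ⬝ᵥ G i *ᵥ x i = 1) :
    productAutocorrelation C x *ᵥ blockDiagonal' G *ᵥ Sigma.uncurry x =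
      (Fintype.card o : R) • Sigma.uncurry x := by
  rw [productAutocorrelation, add_vecMulVec_mulVec_mulVec,
    uncurry_dotProduct_blockDiagonal'_mulVec_uncurry hone]
  simp only [blockDiagonal'_mulVec_uncurry, sub_vecMulVec_mulVec_mulVec (hfix _) (hone _)]
  rfl

theorem productAutocorrelation_mul_mul (hC : ∀ i, (C i)ᵀ = C i) (hG : ∀ i, C i * G i * C i = C i)
    (hfix : ∀ i, C i *ᵥ G i *ᵥ x i = x i) (hone : ∀ i, x i ⬝ᵥ G i *ᵥ x i = 1) :
    productAutocorrelation C x * blockDiagonal' G * productAutocorrelation C x =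
      productAutocorrelation C x +
        ((Fintype.card o : R) - 1) • vecMulVec (Sigma.uncurry x) (Sigma.uncurry x) := by
  rw [productAutocorrelation]
  set A := blockDiagonal' fun i => C i - vecMulVec (x i) (x i)
  have hAGA : A * blockDiagonal' G * A = A := by
    simp only [A, ← blockDiagonal'_mul,
      sub_vecMulVec_mul_mul_sub_vecMulVec (hC _) (hG _) (hfix _) (hone _)]
  have hAG : A *ᵥ blockDiagonal' G *ᵥ Sigma.uncurry x = 0 := by
    simp only [A, blockDiagonal'_mulVec_uncurry, sub_vecMulVec_mulVec_mulVec (hfix _) (hone _)]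
    rfl
  have hGA : Sigma.uncurry x ᵥ* blockDiagonal' G ᵥ* A = 0 := by
    simp only [A, uncurry_vecMul_blockDiagonal',
      vecMul_vecMul_sub_vecMulVec (hC _) (hG _) (hfix _) (hone _)]
    rfl
  rw [add_vecMulVec_mul_mul_add_vecMulVec hAGA hAG hGA,
    uncurry_dotProduct_blockDiagonal'_mulVec_uncurry hone]
  module

end ProductAutocorrelation

end Matrix

theorem block_genInv_observation_point_general {n : ℕ}
    (κ : Fin n → Type*) [∀ i, Fintype (κ i)]
    (C Cinv : ∀ i, Matrix (κ i) (κ i) ℝ)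
    (x : ∀ i, κ i → ℝ)
    (hPSD : ∀ i, (C i).PosSemidef)
    (hginv : ∀ i, C i * Cinv i * C i = C i)
    (hfix : ∀ i, (C i).mulVec ((Cinv i).mulVec (x i)) = x i)
    (hone : ∀ i, x i ⬝ᵥ (Cinv i).mulVec (x i) = 1)
    (bigC bigTilde : Matrix (Σ i, κ i) (Σ i, κ i) ℝ)
    (hbigC : ∀ p q : Σ i, κ i,
      bigC p q = if h : p.1 = q.1 then C q.1 (h ▸ p.2) q.2 else x p.1 p.2 * x q.1 q.2)
    (hbigTilde : ∀ p q : Σ i, κ i,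
      bigTilde p q = if h : p.1 = q.1 then Cinv q.1 (h ▸ p.2) q.2 else 0)
    (μ bigx : (Σ i, κ i) → ℝ)
    (hμ : ∀ p : Σ i, κ i, μ p = (Cinv p.1).mulVec (x p.1) p.2)
    (hbigx : ∀ p : Σ i, κ i, bigx p = x p.1 p.2) :
    bigC * bigTilde * bigC = bigC + ((n : ℝ) - 1) • Matrix.vecMulVec bigx bigx ∧
    bigC.mulVec μ = (n : ℝ) • bigx ∧
    bigC * (bigTilde - (((n : ℝ) - 1) / (n : ℝ) ^ 2) • Matrix.vecMulVec μ μ) * bigC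
      = bigC := by
  have hsymm : ∀ i, (C i)ᵀ = C i := fun i => (hPSD i).isHermitian
  obtain rfl : bigx = Sigma.uncurry x := funext hbigx
  obtain rfl : μ = blockDiagonal' Cinv *ᵥ Sigma.uncurry x := by
    rw [blockDiagonal'_mulVec_uncurry]
    exact funext hμ
  obtain rfl : bigTilde = blockDiagonal' Cinv :=
    ext fun p q => (hbigTilde p q).trans (blockDiagonal'_apply_eq_dite Cinv p q).symm
  obtain rfl : bigC = productAutocorrelation C x :=
    ext fun p q => (hbigC p q).trans (productAutocorrelation_apply p q).symm
  have hprod := productAutocorrelation_mul_mul hsymm hginv hfix hone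
  have hmulVec := productAutocorrelation_mulVec hfix hone
  rw [Fintype.card_fin] at hprod hmulVec
  refine ⟨hprod, hmulVec, ?_⟩
  rcases eq_or_ne n 0 with rfl | hn
  · ext ⟨i, _⟩
    exact i.elim0
  exact mul_sub_smul_vecMulVec_mul_eq_self (Nat.cast_ne_zero.2 hn)
    (productAutocorrelation_transpose hsymm) hprod hmulVec

/-- Block construction of a generalized inverse at an observation point.
Given symmetric PSD blocks `C i` with generalized inverses `Cinv i`, and vectors
`x i` with `C i (Cinv i) (x i) = x i` and `(x i)ᵀ (Cinv i) (x i) = 1`, form the block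
matrix `bigC` with diagonal blocks `C i` and off-diagonal blocks `x i (x j)ᵀ`, the
block-diagonal matrix `bigTilde` with blocks `Cinv i`, and the stacked vector
`μ = (Cinv i (x i))_i`.  Then `bigC bigTilde bigC = bigC + (n-1) x xᵀ`,
`bigC μ = n x` (with `x` the stacked vector), and consequently
`bigTilde - ((n-1)/n²) μ μᵀ` is a generalized inverse of `bigC`. -/
theorem block_genInv_observation_point {n : ℕ}
    (κ : Fin n → Type*) [∀ i, Fintype (κ i)] [∀ i, DecidableEq (κ i)]
    (C Cinv : ∀ i, Matrix (κ i) (κ i) ℝ)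
    (x : ∀ i, κ i → ℝ)
    (hPSD : ∀ i, (C i).PosSemidef)
    (hginv : ∀ i, C i * Cinv i * C i = C i)
    (hfix : ∀ i, (C i).mulVec ((Cinv i).mulVec (x i)) = x i)
    (hone : ∀ i, x i ⬝ᵥ (Cinv i).mulVec (x i) = 1)
    (bigC bigTilde : Matrix (Σ i, κ i) (Σ i, κ i) ℝ)
    (hbigC : ∀ p q : Σ i, κ i,
      bigC p q = if h : p.1 = q.1 then C q.1 (h ▸ p.2) q.2 else x p.1 p.2 * x q.1 q.2)
    (hbigTilde : ∀ p q : Σ i, κ i,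
      bigTilde p q = if h : p.1 = q.1 then Cinv q.1 (h ▸ p.2) q.2 else 0)
    (μ bigx : (Σ i, κ i) → ℝ)
    (hμ : ∀ p : Σ i, κ i, μ p = (Cinv p.1).mulVec (x p.1) p.2)
    (hbigx : ∀ p : Σ i, κ i, bigx p = x p.1 p.2) :
    bigC * bigTilde * bigC = bigC + ((n : ℝ) - 1) • Matrix.vecMulVec bigx bigx ∧
    bigC.mulVec μ = (n : ℝ) • bigx ∧
    bigC * (bigTilde - (((n : ℝ) - 1) / (n : ℝ) ^ 2) • Matrix.vecMulVec μ μ) * bigC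
      = bigC :=
  block_genInv_observation_point_general κ C Cinv x hPSD hginv hfix hone bigC bigTilde hbigC
    hbigTilde μ bigx hμ hbigx
end
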